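/- Fix an integer p ≥ 2 and f ∈ 𝓕, and let (κ_n) be a positive real sequence diverging to ∞. Then (κ_n φ_f(κ_n))² · ẽ₂(κ_n) → (p − 1)/2 as n → ∞; equivalently, ẽ₂(κ_n) = (p−1)/(2(κ_nφ_f(κ_n))²) + o(1/(κ_nφ_f(κ_n))²). -/

import Mathlib

open MeasureTheory Filter Asymptotics Real Set

/-- Logarithmic derivative `φ_f = f'/f`. -/
noncomputable def phiF (f : ℝ → ℝ) (κ : ℝ) : ℝ := deriv f κ / f κ

/-- Membership in the class `𝓕` of angular functions. -/
structure MemF (f : ℝ → ℝ) : Prop where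
  pos : ∀ x, 0 < f x
  monoNonpos : MonotoneOn f (Set.Iic (0:ℝ))
  strictMonoNonneg : StrictMonoOn f (Set.Ici (0:ℝ))
  diff : ∃ M > (0:ℝ), ∀ x ∈ Set.Ioi M, DifferentiableAt ℝ f x
  tendsto_top : Tendsto (fun κ => κ * phiF f κ) atTop atTop
  monoOn : ∃ M' > (0:ℝ), MonotoneOn (fun κ => κ * phiF f κ) (Set.Ioi M')
  littleO : ∀ ξ ζ : ℝ, -1 < ξ → -1 < ζ →
    (fun κ => ∫ s in (-1:ℝ)..1, (1 - s) ^ ξ * (1 + s) ^ ζ *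
        |f (κ * s) / f κ - Real.exp ((s - 1) * (κ * phiF f κ))|)
      =o[atTop] (fun κ => (κ * phiF f κ) ^ (-(ξ + 1)))

/-- The normalizing integral `∫_{-1}^1 (1-s²)^{(p-3)/2} f(κ s) ds`. -/
noncomputable def I0 (p : ℕ) (f : ℝ → ℝ) (κ : ℝ) : ℝ :=
  ∫ s in (-1:ℝ)..1, (1 - s ^ 2) ^ (((p:ℝ) - 3) / 2) * f (κ * s)

/-- The `ℓ`-th moment `e_ℓ(κ)` of the latitude cosine under `Rot_p(θ, κ, f)`. -/
noncomputable def eMom (p : ℕ) (f : ℝ → ℝ) (ℓ : ℕ) (κ : ℝ) : ℝ :=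
  (∫ s in (-1:ℝ)..1, s ^ ℓ * (1 - s ^ 2) ^ (((p:ℝ) - 3) / 2) * f (κ * s)) / I0 p f κ

/-- The variance `ẽ₂(κ) = e₂(κ) - e₁(κ)²`. -/
noncomputable def eTilde2 (p : ℕ) (f : ℝ → ℝ) (κ : ℝ) : ℝ :=
  eMom p f 2 κ - (eMom p f 1 κ) ^ 2



lemma rpow_succ_nonneg {x : ℝ} (hx : 0 ≤ x) {y : ℝ} (hy : y + 1 ≠ 0) :
    x ^ (y + 1) = x * x ^ y := by
  rcases eq_or_lt_of_le hx with h | h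
  · rw [← h, Real.zero_rpow hy, zero_mul]
  · rw [Real.rpow_add_one h.ne', mul_comm]

lemma rpow_base_bound {x : ℝ} (h1 : 1 ≤ x) (h2 : x ≤ 2) (ζ : ℝ) :
    x ^ ζ ≤ max (2 ^ ζ) 1 := by
  rcases le_or_gt 0 ζ with hζ | hζ
  · exact le_max_of_le_left (Real.rpow_le_rpow (by linarith) h2 hζ)
  · exact le_max_of_le_right (Real.rpow_le_one_of_one_le_of_nonpos h1 hζ.le)

lemma II_mul_bdd {g h : ℝ → ℝ} {a b C : ℝ}
    (hg : IntervalIntegrable g volume a b) (hm : Measurable h)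
    (hbd : ∀ x ∈ Set.uIoc a b, |h x| ≤ C) :
    IntervalIntegrable (fun x => g x * h x) volume a b := by
  rw [intervalIntegrable_iff] at hg ⊢
  refine Integrable.mono' (hg.norm.const_mul C)
    (hg.aestronglyMeasurable.mul hm.aestronglyMeasurable) ?_
  refine (ae_restrict_iff' measurableSet_uIoc).2 (ae_of_all _ fun x hx => ?_)
  simp only [norm_mul, Real.norm_eq_abs]
  calc |g x| * |h x| ≤ |g x| * C :=
        mul_le_mul_of_nonneg_left (hbd x hx) (abs_nonneg _)
    _ = C * |g x| := mul_comm _ _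

lemma II_bdd_mul {g h : ℝ → ℝ} {a b C : ℝ}
    (hg : IntervalIntegrable g volume a b) (hm : Measurable h)
    (hbd : ∀ x ∈ Set.uIoc a b, |h x| ≤ C) :
    IntervalIntegrable (fun x => h x * g x) volume a b := by
  rw [intervalIntegrable_iff] at hg ⊢
  refine Integrable.mono' (hg.norm.const_mul C)
    (hm.aestronglyMeasurable.mul hg.aestronglyMeasurable) ?_
  refine (ae_restrict_iff' measurableSet_uIoc).2 (ae_of_all _ fun x hx => ?_)
  simp only [norm_mul, Real.norm_eq_abs]
  calc |h x| * |g x| ≤ C * |g x| :=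
        mul_le_mul_of_nonneg_right (hbd x hx) (abs_nonneg _)

lemma II_weight {ξ ζ : ℝ} (hξ : -1 < ξ) (hζ : -1 < ζ) :
    IntervalIntegrable (fun s => (1 - s) ^ ξ * (1 + s) ^ ζ) volume (-1) 1 := by
  have hmζ : Measurable fun s : ℝ => (1 + s) ^ ζ :=
    (measurable_const.add measurable_id).pow_const ζ
  have hmξ : Measurable fun s : ℝ => (1 - s) ^ ξ :=
    (measurable_const.sub measurable_id).pow_const ξ
  have left : IntervalIntegrable (fun s => (1 - s) ^ ξ * (1 + s) ^ ζ) volume (-1) 0 := by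
    have base : IntervalIntegrable (fun s : ℝ => (1 + s) ^ ζ) volume (-1) 0 := by
      have h := (intervalIntegral.intervalIntegrable_rpow' (a := 0) (b := 1) hζ).comp_add_right 1
      simpa [add_comm] using h
    refine II_bdd_mul base hmξ (C := max (2 ^ ξ) 1) fun x hx => ?_
    rw [Set.uIoc_of_le (by norm_num : (-1:ℝ) ≤ 0)] at hx
    rw [abs_of_nonneg (Real.rpow_nonneg (by linarith [hx.1, hx.2]) _)]
    exact rpow_base_bound (by linarith [hx.2]) (by linarith [hx.1]) ξ
  have right : IntervalIntegrable (fun s => (1 - s) ^ ξ * (1 + s) ^ ζ) volume 0 1 := by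
    have base : IntervalIntegrable (fun s : ℝ => (1 - s) ^ ξ) volume 0 1 := by
      have h := (intervalIntegral.intervalIntegrable_rpow' (a := 0) (b := 1) hξ).comp_sub_left 1
      simpa using h.symm
    refine II_mul_bdd base hmζ (C := max (2 ^ ζ) 1) fun x hx => ?_
    rw [Set.uIoc_of_le (by norm_num : (0:ℝ) ≤ 1)] at hx
    rw [abs_of_nonneg (Real.rpow_nonneg (by linarith [hx.1]) _)]
    exact rpow_base_bound (by linarith [hx.1]) (by linarith [hx.2]) ζ
  exact left.trans right

lemma II_weight_mul {ξ ζ : ℝ} (hξ : -1 < ξ) (hζ : -1 < ζ) {F : ℝ → ℝ} {C : ℝ}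
    (hm : Measurable F) (hbd : ∀ x ∈ Set.Ioc (-1:ℝ) 1, |F x| ≤ C) :
    IntervalIntegrable (fun s => (1 - s) ^ ξ * (1 + s) ^ ζ * F s) volume (-1) 1 :=
  II_mul_bdd (II_weight hξ hζ) hm
    (by rwa [Set.uIoc_of_le (by norm_num : (-1:ℝ) ≤ 1)])

lemma watson_meas (ξ ζ t : ℝ) : Measurable fun v : ℝ => v ^ ξ * (2 - v / t) ^ ζ * Real.exp (-v) :=
  ((measurable_id.pow_const ξ).mul
    ((measurable_const.sub (measurable_id.div_const t)).pow_const ζ)).mul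
    (Real.measurable_exp.comp measurable_neg)

lemma vpow_bound {ξ t v : ℝ} (ht : 0 < t) (h1 : t ≤ v) (h2 : v ≤ 2 * t) :
    v ^ ξ ≤ max (t ^ ξ) ((2 * t) ^ ξ) := by
  rcases le_or_gt 0 ξ with hξ | hξ
  · exact le_max_of_le_right (Real.rpow_le_rpow (by linarith) h2 hξ)
  · exact le_max_of_le_left (Real.rpow_le_rpow_of_nonpos ht h1 hξ.le)

lemma II_watson_left {ξ ζ : ℝ} (hξ : -1 < ξ) {t : ℝ} (ht : 0 < t) :
    IntervalIntegrable (fun v => v ^ ξ * (2 - v / t) ^ ζ * Real.exp (-v)) volume 0 t := by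
  have base : IntervalIntegrable (fun v : ℝ => v ^ ξ) volume 0 t :=
    intervalIntegral.intervalIntegrable_rpow' hξ
  have step1 : IntervalIntegrable (fun v => v ^ ξ * (2 - v / t) ^ ζ) volume 0 t := by
    refine II_mul_bdd base ((measurable_const.sub (measurable_id.div_const t)).pow_const ζ)
      (C := max (2 ^ ζ) 1) fun x hx => ?_
    rw [Set.uIoc_of_le ht.le] at hx
    have hx1 : 0 < x := hx.1
    have hx2 : x ≤ t := hx.2
    have hb1 : (1:ℝ) ≤ 2 - x / t := by
      have : x / t ≤ 1 := (div_le_one ht).2 hx2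
      linarith
    have hb2 : 2 - x / t ≤ 2 := by
      have : 0 < x / t := div_pos hx1 ht
      linarith
    rw [abs_of_nonneg (Real.rpow_nonneg (by linarith) _)]
    exact rpow_base_bound hb1 hb2 ζ
  refine II_mul_bdd step1 (Real.measurable_exp.comp measurable_neg) (C := 1) fun x hx => ?_
  rw [Set.uIoc_of_le ht.le] at hx
  rw [abs_of_nonneg (Real.exp_nonneg _)]
  exact Real.exp_le_one_iff.2 (by linarith [hx.1])

lemma II_watson_base {ζ : ℝ} (hζ : -1 < ζ) {t : ℝ} (ht : 0 < t) :
  IntervalIntegrable (fun v : ℝ => (2 - v / t) ^ ζ) volume t (2 * t) := by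
  have h0 : IntervalIntegrable (fun x : ℝ => x ^ ζ) volume 0 1 :=
    intervalIntegral.intervalIntegrable_rpow' hζ
  have h1 := h0.comp_sub_left 2
  -- h1 : II (fun x => (2 - x) ^ ζ) volume (2 - 0) (2 - 1)
  have h2 := h1.comp_mul_right (c := t⁻¹)
  -- h2 : II (fun v => (2 - v * t⁻¹) ^ ζ) volume ((2-0)/t⁻¹) ((2-1)/t⁻¹)
  have e : ∀ v : ℝ, (2 - v * t⁻¹) = 2 - v / t := by intro v; rw [div_eq_mul_inv]
  simp only [e, sub_zero] at h2
  rw [show (2:ℝ)/t⁻¹ = 2*t by field_simp, show ((2:ℝ)-1)/t⁻¹ = t by norm_num] at h2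
  exact h2.symm

lemma II_watson_right {ξ ζ : ℝ} (hζ : -1 < ζ) {t : ℝ} (ht : 0 < t) :
    IntervalIntegrable (fun v => v ^ ξ * (2 - v / t) ^ ζ * Real.exp (-v)) volume t (2 * t) := by
  have base := II_watson_base hζ ht
  have step1 : IntervalIntegrable (fun v => (2 - v / t) ^ ζ * v ^ ξ) volume t (2 * t) := by
    refine II_mul_bdd base (measurable_id.pow_const ξ)
      (C := max (t ^ ξ) ((2 * t) ^ ξ)) fun x hx => ?_
    rw [Set.uIoc_of_le (by linarith : t ≤ 2 * t)] at hx
    rw [abs_of_nonneg (Real.rpow_nonneg (by linarith [hx.1]) _)]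
    exact vpow_bound ht hx.1.le hx.2
  have step2 : IntervalIntegrable (fun v => (2 - v / t) ^ ζ * v ^ ξ * Real.exp (-v))
      volume t (2 * t) := by
    refine II_mul_bdd step1 (Real.measurable_exp.comp measurable_neg) (C := 1) fun x hx => ?_
    rw [Set.uIoc_of_le (by linarith : t ≤ 2 * t)] at hx
    rw [abs_of_nonneg (Real.exp_nonneg _)]
    exact Real.exp_le_one_iff.2 (by linarith [hx.1])
  have : (fun v => v ^ ξ * (2 - v / t) ^ ζ * Real.exp (-v))
      = fun v => (2 - v / t) ^ ζ * v ^ ξ * Real.exp (-v) := by funext v; ring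
  rw [this]; exact step2

lemma watson_key {ξ ζ : ℝ} (t : ℝ) (ht : 0 < t) :
    t ^ (ξ + 1) * ∫ s in (-1:ℝ)..1, (1 - s) ^ ξ * (1 + s) ^ ζ * Real.exp ((s - 1) * t)
    = ∫ v in (0:ℝ)..(2 * t), v ^ ξ * (2 - v / t) ^ ζ * Real.exp (-v) := by
  have hA : (∫ s in (-1:ℝ)..1, (1 - s) ^ ξ * (1 + s) ^ ζ * Real.exp ((s - 1) * t))
      = ∫ u in (0:ℝ)..2, u ^ ξ * (2 - u) ^ ζ * Real.exp (-(u * t)) := by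
    have h := intervalIntegral.integral_comp_sub_left (a := (-1:ℝ)) (b := 1)
      (fun u => u ^ ξ * (2 - u) ^ ζ * Real.exp (-(u * t))) 1
    norm_num at h
    rw [← h]
    apply intervalIntegral.integral_congr
    intro s _
    dsimp only
    have e1 : 2 - (1 - s) = 1 + s := by ring
    have e2 : -((1 - s) * t) = (s - 1) * t := by ring
    rw [e1, e2]
  have hB := intervalIntegral.integral_comp_mul_right (a := (0:ℝ)) (b := 2)
    (fun v => v ^ ξ * (2 - v / t) ^ ζ * Real.exp (-v)) ht.ne'
  -- hB : ∫ u in 0..2, (u*t)^ξ * (2 - u*t/t)^ζ * exp (-(u*t)) = t⁻¹ • ∫ v in 0*t..2*t, ...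
  have hC : (∫ u in (0:ℝ)..2, (u * t) ^ ξ * (2 - u * t / t) ^ ζ * Real.exp (-(u * t)))
      = t ^ ξ * ∫ u in (0:ℝ)..2, u ^ ξ * (2 - u) ^ ζ * Real.exp (-(u * t)) := by
    rw [← intervalIntegral.integral_const_mul]
    apply intervalIntegral.integral_congr
    intro u hu
    rw [Set.uIcc_of_le (by norm_num : (0:ℝ) ≤ 2)] at hu
    dsimp only
    rw [mul_div_cancel_right₀ _ ht.ne', Real.mul_rpow hu.1 ht.le]
    ring
  rw [hA, Real.rpow_add_one ht.ne']
  rw [hC] at hB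
  rw [smul_eq_mul, zero_mul] at hB
  have := congrArg (fun z => t * z) hB
  calc t ^ ξ * t * ∫ u in (0:ℝ)..2, u ^ ξ * (2 - u) ^ ζ * Real.exp (-(u * t))
      = t * (t ^ ξ * ∫ u in (0:ℝ)..2, u ^ ξ * (2 - u) ^ ζ * Real.exp (-(u * t))) := by ring
    _ = t * (t⁻¹ * ∫ v in (0:ℝ)..(2 * t), v ^ ξ * (2 - v / t) ^ ζ * Real.exp (-v)) := this
    _ = ∫ v in (0:ℝ)..(2 * t), v ^ ξ * (2 - v / t) ^ ζ * Real.exp (-v) := by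
        field_simp

lemma watson_Q {ξ ζ : ℝ} (hξ : -1 < ξ) (hζ : -1 < ζ) :
    Tendsto (fun t : ℝ => ∫ v in t..(2*t), v ^ ξ * (2 - v / t) ^ ζ * Real.exp (-v))
      atTop (nhds 0) := by
  have hζ1 : (0:ℝ) < ζ + 1 := by linarith
  set C : ℝ := max 1 (2 ^ ξ) * (ζ + 1)⁻¹ with hC
  have hg : Tendsto (fun t : ℝ => C * (t ^ (ξ + 1) * Real.exp (-t))) atTop (nhds 0) := by
    have h := tendsto_rpow_mul_exp_neg_mul_atTop_nhds_zero (ξ + 1) 1 one_pos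
    simp only [neg_one_mul] at h
    simpa using h.const_mul C
  refine squeeze_zero' ?_ ?_ hg
  · filter_upwards [eventually_gt_atTop (0:ℝ)] with t ht
    apply intervalIntegral.integral_nonneg (by linarith)
    intro v hv
    have h1 : 0 < v := lt_of_lt_of_le ht hv.1
    have h2 : v / t ≤ 2 := (div_le_iff₀ ht).2 (by linarith [hv.2])
    have : (0:ℝ) ≤ 2 - v / t := by linarith
    positivity
  · filter_upwards [eventually_gt_atTop (0:ℝ)] with t ht
    set M : ℝ := max (t ^ ξ) ((2 * t) ^ ξ) with hM
    have hM0 : 0 ≤ M := le_trans (Real.rpow_nonneg ht.le ξ) (le_max_left _ _)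
    have step1 : (∫ v in t..(2*t), v ^ ξ * (2 - v / t) ^ ζ * Real.exp (-v))
        ≤ ∫ v in t..(2*t), (M * Real.exp (-t)) * (2 - v / t) ^ ζ := by
      apply intervalIntegral.integral_mono_on (by linarith) (II_watson_right hζ ht)
        ((II_watson_base hζ ht).const_mul _)
      intro v hv
      have hv1 : t ≤ v := hv.1
      have hv2 : v ≤ 2 * t := hv.2
      have hb0 : (0:ℝ) ≤ 2 - v / t := by
        have : v / t ≤ 2 := (div_le_iff₀ ht).2 (by linarith)
        linarith
      have h1 : v ^ ξ ≤ M := vpow_bound ht hv1 hv2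
      have h2 : Real.exp (-v) ≤ Real.exp (-t) := Real.exp_le_exp.2 (by linarith)
      calc v ^ ξ * (2 - v / t) ^ ζ * Real.exp (-v)
          = (v ^ ξ * Real.exp (-v)) * (2 - v / t) ^ ζ := by ring
        _ ≤ (M * Real.exp (-t)) * (2 - v / t) ^ ζ := by
            apply mul_le_mul_of_nonneg_right _ (Real.rpow_nonneg hb0 _)
            exact mul_le_mul h1 h2 (Real.exp_nonneg _) hM0
    have hIz : (∫ v in t..(2*t), (2 - v / t) ^ ζ) = t * (ζ + 1)⁻¹ := by
      have h1 := intervalIntegral.integral_comp_div (a := t) (b := 2*t)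
        (fun x : ℝ => (2 - x) ^ ζ) ht.ne'
      rw [div_self ht.ne', mul_div_assoc, div_self ht.ne', mul_one] at h1
      have h2 := intervalIntegral.integral_comp_sub_left (a := (1:ℝ)) (b := 2)
        (fun y : ℝ => y ^ ζ) 2
      norm_num at h2
      rw [integral_rpow (Or.inl hζ)] at h2
      rw [h1, h2]
      rw [Real.one_rpow, Real.zero_rpow hζ1.ne', smul_eq_mul]
      ring
    have step2 : (∫ v in t..(2*t), (M * Real.exp (-t)) * (2 - v / t) ^ ζ)
        = (M * Real.exp (-t)) * (t * (ζ + 1)⁻¹) := by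
      rw [intervalIntegral.integral_const_mul, hIz]
    have hMeq : M = max 1 (2 ^ ξ) * t ^ ξ := by
      rw [hM, Real.mul_rpow (by norm_num : (0:ℝ) ≤ 2) ht.le,
        max_mul_of_nonneg _ _ (Real.rpow_nonneg ht.le ξ), one_mul]
    calc (∫ v in t..(2*t), v ^ ξ * (2 - v / t) ^ ζ * Real.exp (-v))
        ≤ (M * Real.exp (-t)) * (t * (ζ + 1)⁻¹) := step1.trans (le_of_eq step2)
      _ = C * (t ^ (ξ + 1) * Real.exp (-t)) := by
          rw [hMeq, hC, Real.rpow_add_one ht.ne']; ring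

lemma watson_P {ξ ζ : ℝ} (hξ : -1 < ξ) (hζ : -1 < ζ) :
    Tendsto (fun t : ℝ => ∫ v in (0:ℝ)..t, v ^ ξ * (2 - v / t) ^ ζ * Real.exp (-v))
      atTop (nhds (2 ^ ζ * Real.Gamma (ξ + 1))) := by
  have hξ1 : (0:ℝ) < ξ + 1 := by linarith
  set F : ℝ → ℝ → ℝ :=
    fun t => (Set.Ioc (0:ℝ) t).indicator (fun v => v ^ ξ * (2 - v / t) ^ ζ * Real.exp (-v))
    with hF
  set Flim : ℝ → ℝ :=
    (Set.Ioi (0:ℝ)).indicator (fun v => 2 ^ ζ * (v ^ ξ * Real.exp (-v))) with hFlim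
  set bound : ℝ → ℝ :=
    (Set.Ioi (0:ℝ)).indicator (fun v => max (2 ^ ζ) 1 * (v ^ ξ * Real.exp (-v))) with hbound
  have hGamma : IntegrableOn (fun v : ℝ => v ^ ξ * Real.exp (-v)) (Set.Ioi 0) volume := by
    have h := Real.GammaIntegral_convergent hξ1
    refine h.congr_fun (fun x hx => ?_) measurableSet_Ioi
    rw [add_sub_cancel_right, mul_comm]
  have key : Tendsto (fun t : ℝ => ∫ v, F t v) atTop (nhds (∫ v, Flim v)) := by
    apply tendsto_integral_filter_of_dominated_convergence bound
    · filter_upwards with t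
      exact ((watson_meas ξ ζ t).indicator measurableSet_Ioc).aestronglyMeasurable
    · filter_upwards [eventually_gt_atTop (0:ℝ)] with t ht
      refine ae_of_all _ fun v => ?_
      by_cases hv : v ∈ Set.Ioc (0:ℝ) t
      · rw [hF]
        simp only [Set.indicator_of_mem hv]
        have hv1 : 0 < v := hv.1
        have hvt : v / t ≤ 1 := (div_le_one ht).2 hv.2
        have hvt0 : 0 < v / t := div_pos hv1 ht
        have hb1 : (1:ℝ) ≤ 2 - v / t := by linarith
        have hb2 : 2 - v / t ≤ 2 := by linarith
        rw [Real.norm_eq_abs, abs_of_nonneg (by positivity)]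
        rw [hbound]
        simp only [Set.indicator_of_mem (Set.mem_Ioi.2 hv1)]
        calc v ^ ξ * (2 - v / t) ^ ζ * Real.exp (-v)
            = (2 - v / t) ^ ζ * (v ^ ξ * Real.exp (-v)) := by ring
          _ ≤ max (2 ^ ζ) 1 * (v ^ ξ * Real.exp (-v)) := by
              apply mul_le_mul_of_nonneg_right (rpow_base_bound hb1 hb2 ζ)
              positivity
      · rw [hF]
        simp only [Set.indicator_of_notMem hv, norm_zero]
        rw [hbound]
        apply Set.indicator_nonneg
        intro x hx
        have : (0:ℝ) ≤ max (2 ^ ζ) 1 := le_trans zero_le_one (le_max_right _ _)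
        have hx0 : (0:ℝ) < x := hx
        positivity
    · rw [hbound, integrable_indicator_iff measurableSet_Ioi]
      exact hGamma.const_mul _
    · refine ae_of_all _ fun v => ?_
      rcases le_or_gt v 0 with hv | hv
      · have h1 : ∀ t : ℝ, F t v = 0 := fun t =>
          Set.indicator_of_notMem (fun hmem => absurd hmem.1 (not_lt.2 hv)) _
        have h2 : Flim v = 0 :=
          Set.indicator_of_notMem (by simpa using hv) _
        simp only [h1, h2]
        exact tendsto_const_nhds
      · have h2 : Flim v = 2 ^ ζ * (v ^ ξ * Real.exp (-v)) :=
          Set.indicator_of_mem hv _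
        rw [h2]
        have hbase : Tendsto (fun t : ℝ => 2 - v / t) atTop (nhds 2) := by
          have := Tendsto.div_atTop (tendsto_const_nhds (x := v)) tendsto_id
          simpa using tendsto_const_nhds.sub this
        have hrpow : Tendsto (fun t : ℝ => (2 - v / t) ^ ζ) atTop (nhds (2 ^ ζ)) :=
          hbase.rpow_const (Or.inl (by norm_num))
        rw [show (2:ℝ) ^ ζ * (v ^ ξ * Real.exp (-v)) = v ^ ξ * 2 ^ ζ * Real.exp (-v) by ring]
        refine ((hrpow.const_mul (v ^ ξ)).mul_const (Real.exp (-v))).congr' ?_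
        filter_upwards [eventually_ge_atTop v] with t ht
        show v ^ ξ * (2 - v / t) ^ ζ * Real.exp (-v) = F t v
        rw [hF]
        dsimp only
        exact (Set.indicator_of_mem (Set.mem_Ioc.mpr ⟨hv, ht⟩)
          (fun v => v ^ ξ * (2 - v / t) ^ ζ * Real.exp (-v))).symm
  have hlim : (∫ v, Flim v) = 2 ^ ζ * Real.Gamma (ξ + 1) := by
    rw [hFlim, MeasureTheory.integral_indicator measurableSet_Ioi]
    rw [MeasureTheory.integral_const_mul]
    congr 1
    rw [Real.Gamma_eq_integral hξ1]
    apply MeasureTheory.setIntegral_congr_fun measurableSet_Ioi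
    intro x hx
    dsimp only
    simp only [add_sub_cancel_right]
    ring
  rw [← hlim]
  refine key.congr' ?_
  filter_upwards [eventually_ge_atTop (0:ℝ)] with t ht
  rw [hF]
  rw [MeasureTheory.integral_indicator measurableSet_Ioc]
  exact (intervalIntegral.integral_of_le ht).symm

lemma watson {ξ ζ : ℝ} (hξ : -1 < ξ) (hζ : -1 < ζ) :
    Tendsto (fun t : ℝ => t ^ (ξ + 1) *
        ∫ s in (-1:ℝ)..1, (1 - s) ^ ξ * (1 + s) ^ ζ * Real.exp ((s - 1) * t))
      atTop (nhds (2 ^ ζ * Real.Gamma (ξ + 1))) := by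
  have h := (watson_P hξ hζ).add (watson_Q hξ hζ)
  rw [add_zero] at h
  refine Tendsto.congr' ?_ h
  filter_upwards [eventually_gt_atTop (0:ℝ)] with t ht
  rw [watson_key t ht]
  exact intervalIntegral.integral_add_adjacent_intervals
    (II_watson_left hξ ht) (II_watson_right hζ ht)


lemma MemF.monotone {f : ℝ → ℝ} (hf : MemF f) : Monotone f := by
  intro x y hxy
  rcases le_total y 0 with hy | hy
  · exact hf.monoNonpos (Set.mem_Iic.2 (le_trans hxy hy)) (Set.mem_Iic.2 hy) hxy
  · rcases le_total x 0 with hx | hx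
    · calc f x ≤ f 0 := hf.monoNonpos (Set.mem_Iic.2 hx) (Set.mem_Iic.2 le_rfl) hx
        _ ≤ f y := hf.strictMonoNonneg.monotoneOn (Set.mem_Ici.2 le_rfl) (Set.mem_Ici.2 hy) hy
    · exact hf.strictMonoNonneg.monotoneOn (Set.mem_Ici.2 hx) (Set.mem_Ici.2 hy) hxy

lemma ratio_bound {f : ℝ → ℝ} (hf : MemF f) {x : ℝ} (hx : 0 < x) :
    ∀ s ∈ Set.Ioc (-1:ℝ) 1, |f (x * s) / f x| ≤ 1 := by
  intro s hs
  have h1 : f (x * s) ≤ f x := by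
    have : x * s ≤ x := by nlinarith [hs.2]
    exact hf.monotone this
  rw [abs_of_nonneg (div_nonneg (hf.pos _).le (hf.pos _).le)]
  exact (div_le_one (hf.pos x)).2 h1

lemma II_ratio {f : ℝ → ℝ} (hf : MemF f) {x : ℝ} (hx : 0 < x) {ξ ζ : ℝ}
    (hξ : -1 < ξ) (hζ : -1 < ζ) :
    IntervalIntegrable (fun s => (1 - s) ^ ξ * (1 + s) ^ ζ * (f (x * s) / f x))
      volume (-1) 1 :=
  II_weight_mul hξ hζ
    (((hf.monotone.measurable.comp (measurable_const_mul x)).div_const _))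
    (ratio_bound hf hx)

lemma II_exp {ξ ζ : ℝ} (hξ : -1 < ξ) (hζ : -1 < ζ) (t : ℝ) :
    IntervalIntegrable (fun s => (1 - s) ^ ξ * (1 + s) ^ ζ * Real.exp ((s - 1) * t))
      volume (-1) 1 := by
  refine II_weight_mul hξ hζ (C := Real.exp (2 * |t|))
    (Real.measurable_exp.comp ((measurable_id.sub measurable_const).mul_const t)) ?_
  intro s hs
  rw [abs_of_nonneg (Real.exp_nonneg _)]
  apply Real.exp_le_exp.2
  calc (s - 1) * t ≤ |(s - 1) * t| := le_abs_self _
    _ = |s - 1| * |t| := abs_mul _ _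
    _ ≤ 2 * |t| := by
        apply mul_le_mul_of_nonneg_right _ (abs_nonneg t)
        rw [abs_le]; constructor <;> [linarith [hs.1]; linarith [hs.2]]

lemma Gconv (f : ℝ → ℝ) (hf : MemF f) (κ : ℕ → ℝ) (hκpos : ∀ n, 0 < κ n)
    (hκtop : Tendsto κ atTop atTop) {ξ ζ : ℝ} (hξ : -1 < ξ) (hζ : -1 < ζ) :
    Tendsto (fun n => (κ n * phiF f (κ n)) ^ (ξ + 1) *
        ∫ s in (-1:ℝ)..1, (1 - s) ^ ξ * (1 + s) ^ ζ * (f (κ n * s) / f (κ n)))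
      atTop (nhds (2 ^ ζ * Real.Gamma (ξ + 1))) := by
  have htt : Tendsto (fun n => κ n * phiF f (κ n)) atTop atTop := hf.tendsto_top.comp hκtop
  have hdiff : ∀ n,
      |(∫ s in (-1:ℝ)..1, (1 - s) ^ ξ * (1 + s) ^ ζ * (f (κ n * s) / f (κ n))) -
        ∫ s in (-1:ℝ)..1, (1 - s) ^ ξ * (1 + s) ^ ζ *
          Real.exp ((s - 1) * (κ n * phiF f (κ n)))|
      ≤ ∫ s in (-1:ℝ)..1, (1 - s) ^ ξ * (1 + s) ^ ζ *
          |f (κ n * s) / f (κ n) - Real.exp ((s - 1) * (κ n * phiF f (κ n)))| := by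
    intro n
    have hIr := II_ratio hf (hκpos n) hξ hζ
    have hIe := II_exp hξ hζ (κ n * phiF f (κ n))
    rw [← intervalIntegral.integral_sub hIr hIe]
    refine le_trans (intervalIntegral.abs_integral_le_integral_abs (by norm_num)) (le_of_eq ?_)
    apply intervalIntegral.integral_congr
    intro s hs
    rw [Set.uIcc_of_le (by norm_num : (-1:ℝ) ≤ 1)] at hs
    dsimp only
    rw [← mul_sub, abs_mul]
    congr 1
    apply abs_of_nonneg
    exact mul_nonneg (Real.rpow_nonneg (by linarith [hs.2]) _)
      (Real.rpow_nonneg (by linarith [hs.1]) _)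
  have hDo : Tendsto (fun n => (κ n * phiF f (κ n)) ^ (ξ + 1) *
      ∫ s in (-1:ℝ)..1, (1 - s) ^ ξ * (1 + s) ^ ζ *
        |f (κ n * s) / f (κ n) - Real.exp ((s - 1) * (κ n * phiF f (κ n)))|)
      atTop (nhds 0) := by
    have ho := (hf.littleO ξ ζ hξ hζ).comp_tendsto hκtop
    have hdiv := ho.tendsto_div_nhds_zero
    refine hdiv.congr' ?_
    filter_upwards [htt.eventually_gt_atTop 0] with n htn
    simp only [Function.comp_apply]
    rw [Real.rpow_neg (le_of_lt htn), div_eq_mul_inv, inv_inv, mul_comm]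
  have h2 : Tendsto (fun n => (κ n * phiF f (κ n)) ^ (ξ + 1) *
      ∫ s in (-1:ℝ)..1, (1 - s) ^ ξ * (1 + s) ^ ζ *
        Real.exp ((s - 1) * (κ n * phiF f (κ n)))) atTop
      (nhds (2 ^ ζ * Real.Gamma (ξ + 1))) := by
    have := (watson hξ hζ).comp htt
    exact this
  have h3 : Tendsto (fun n => (κ n * phiF f (κ n)) ^ (ξ + 1) *
      ((∫ s in (-1:ℝ)..1, (1 - s) ^ ξ * (1 + s) ^ ζ * (f (κ n * s) / f (κ n))) -
        ∫ s in (-1:ℝ)..1, (1 - s) ^ ξ * (1 + s) ^ ζ *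
          Real.exp ((s - 1) * (κ n * phiF f (κ n))))) atTop (nhds 0) := by
    refine squeeze_zero_norm' ?_ hDo
    filter_upwards [htt.eventually_gt_atTop 0] with n htn
    rw [Real.norm_eq_abs, abs_mul, abs_of_nonneg (Real.rpow_nonneg (le_of_lt htn) _)]
    exact mul_le_mul_of_nonneg_left (hdiff n) (Real.rpow_nonneg (le_of_lt htn) _)
  have hsum := h2.add h3
  rw [add_zero] at hsum
  refine hsum.congr fun n => ?_
  ring

lemma key_ident (p : ℕ) (hp : 2 ≤ p) (f : ℝ → ℝ) (hf : MemF f) (x : ℝ) (hx : 0 < x)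
    (ht : 0 < x * phiF f x) (α : ℝ) (hα : α = ((p:ℝ) - 3) / 2) :
    (x * phiF f x) ^ 2 * eTilde2 p f x =
      ((x * phiF f x) ^ (α + 2 + 1) *
          (∫ s in (-1:ℝ)..1, (1 - s) ^ (α + 2) * (1 + s) ^ α * (f (x * s) / f x)) *
        ((x * phiF f x) ^ (α + 1) *
          ∫ s in (-1:ℝ)..1, (1 - s) ^ α * (1 + s) ^ α * (f (x * s) / f x)) -
        ((x * phiF f x) ^ (α + 1 + 1) *
          ∫ s in (-1:ℝ)..1, (1 - s) ^ (α + 1) * (1 + s) ^ α * (f (x * s) / f x)) ^ 2) /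
      ((x * phiF f x) ^ (α + 1) *
          ∫ s in (-1:ℝ)..1, (1 - s) ^ α * (1 + s) ^ α * (f (x * s) / f x)) ^ 2 := by
  have hp2 : (2:ℝ) ≤ (p:ℝ) := by exact_mod_cast hp
  have hα0 : -1 < α := by rw [hα]; linarith
  have hα1 : -1 < α + 1 := by linarith
  have hα2 : -1 < α + 2 := by linarith
  have hα1' : α + 1 ≠ 0 := by rw [hα]; intro h; nlinarith
  have hα2' : α + 1 + 1 ≠ 0 := by rw [hα]; intro h; nlinarith
  have hc : 0 < f x := hf.pos x
  have hmf : Measurable fun s : ℝ => f (x * s) :=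
    hf.monotone.measurable.comp (measurable_const_mul x)
  have hbdf : ∀ s ∈ Set.Ioc (-1:ℝ) 1, |f (x * s)| ≤ f x := by
    intro s hs
    rw [abs_of_nonneg (hf.pos _).le]
    exact hf.monotone (by nlinarith [hs.2])
  have II0 : IntervalIntegrable (fun s => (1 - s) ^ α * (1 + s) ^ α * f (x * s))
      volume (-1) 1 := II_weight_mul hα0 hα0 hmf hbdf
  have II1 : IntervalIntegrable (fun s => (1 - s) ^ (α + 1) * (1 + s) ^ α * f (x * s))
      volume (-1) 1 := II_weight_mul hα1 hα0 hmf hbdf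
  have II2 : IntervalIntegrable (fun s => (1 - s) ^ (α + 2) * (1 + s) ^ α * f (x * s))
      volume (-1) 1 := II_weight_mul hα2 hα0 hmf hbdf
  set K0 : ℝ := ∫ s in (-1:ℝ)..1, (1 - s) ^ α * (1 + s) ^ α * f (x * s) with hK0
  set K1 : ℝ := ∫ s in (-1:ℝ)..1, (1 - s) ^ (α + 1) * (1 + s) ^ α * f (x * s) with hK1
  set K2 : ℝ := ∫ s in (-1:ℝ)..1, (1 - s) ^ (α + 2) * (1 + s) ^ α * f (x * s) with hK2
  have hK0pos : 0 < K0 := by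
    rw [hK0]
    apply intervalIntegral.intervalIntegral_pos_of_pos_on II0 _ (by norm_num)
    intro s hs
    have h1 : 0 < 1 - s := by linarith [hs.2]
    have h2 : 0 < 1 + s := by linarith [hs.1]
    have := hf.pos (x * s)
    positivity
  -- ratio integrals in terms of K's
  have hR : ∀ ξ : ℝ, (∫ s in (-1:ℝ)..1, (1 - s) ^ ξ * (1 + s) ^ α * (f (x * s) / f x))
      = (∫ s in (-1:ℝ)..1, (1 - s) ^ ξ * (1 + s) ^ α * f (x * s)) / f x := by
    intro ξ
    rw [← intervalIntegral.integral_div]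
    apply intervalIntegral.integral_congr
    intro s _
    dsimp only
    rw [mul_div_assoc]
  -- pointwise weight identities
  have hW : ∀ s ∈ Set.uIcc (-1:ℝ) 1,
      ((1:ℝ) - s ^ 2) ^ α = (1 - s) ^ α * (1 + s) ^ α := by
    intro s hs
    rw [Set.uIcc_of_le (by norm_num : (-1:ℝ) ≤ 1)] at hs
    rw [show (1:ℝ) - s ^ 2 = (1 - s) * (1 + s) by ring,
      Real.mul_rpow (by linarith [hs.2]) (by linarith [hs.1])]
  have hS1 : ∀ s ∈ Set.uIcc (-1:ℝ) 1,
      ((1:ℝ) - s) ^ (α + 1) = (1 - s) * (1 - s) ^ α := by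
    intro s hs
    rw [Set.uIcc_of_le (by norm_num : (-1:ℝ) ≤ 1)] at hs
    exact rpow_succ_nonneg (by linarith [hs.2]) hα1'
  have hS2 : ∀ s ∈ Set.uIcc (-1:ℝ) 1,
      ((1:ℝ) - s) ^ (α + 2) = (1 - s) * (1 - s) ^ (α + 1) := by
    intro s hs
    rw [Set.uIcc_of_le (by norm_num : (-1:ℝ) ≤ 1)] at hs
    rw [show α + 2 = (α + 1) + 1 by ring]
    exact rpow_succ_nonneg (by linarith [hs.2]) (by rwa [show α + 1 + 1 = α + 2 by ring,
      show α + 2 = (α+1)+1 by ring])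
  -- I0 = K0
  have hI0 : I0 p f x = K0 := by
    rw [I0, hK0, ← hα]
    apply intervalIntegral.integral_congr
    intro s hs
    dsimp only
    rw [hW s hs]
  -- first moment integral
  have hJ1 : (∫ s in (-1:ℝ)..1, s ^ (1:ℕ) * (1 - s ^ 2) ^ α * f (x * s)) = K0 - K1 := by
    rw [hK0, hK1, ← intervalIntegral.integral_sub II0 II1]
    apply intervalIntegral.integral_congr
    intro s hs
    dsimp only
    rw [pow_one, hW s hs, hS1 s hs]
    ring
  have hJ2 : (∫ s in (-1:ℝ)..1, s ^ (2:ℕ) * (1 - s ^ 2) ^ α * f (x * s))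
      = K0 - 2 * K1 + K2 := by
    rw [hK0, hK1, hK2, ← intervalIntegral.integral_const_mul,
      ← intervalIntegral.integral_sub II0 (II1.const_mul 2),
      ← intervalIntegral.integral_add (II0.sub (II1.const_mul 2)) II2]
    apply intervalIntegral.integral_congr
    intro s hs
    dsimp only
    rw [hW s hs, hS2 s hs, hS1 s hs]
    ring
  have hMom1 : eMom p f 1 x = (K0 - K1) / K0 := by
    rw [eMom, hI0, ← hα, hJ1]
  have hMom2 : eMom p f 2 x = (K0 - 2 * K1 + K2) / K0 := by
    rw [eMom, hI0, ← hα, hJ2]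
  have hET : eTilde2 p f x = (K0 - 2 * K1 + K2) / K0 - ((K0 - K1) / K0) ^ 2 := by
    rw [eTilde2, hMom1, hMom2]
  rw [hET, hR, hR, hR, ← hK0, ← hK1, ← hK2]
  set y : ℝ := x * phiF f x with hy
  have hy0 : y ≠ 0 := ne_of_gt ht
  have hyA : 0 < y ^ (α + 1) := Real.rpow_pos_of_pos ht _
  have e1 : y ^ (α + 1 + 1) = y ^ (α + 1) * y := Real.rpow_add_one hy0 (α + 1)
  have e2 : y ^ (α + 2 + 1) = y ^ (α + 1) * y * y := by
    rw [show α + 2 + 1 = α + 1 + 1 + 1 by ring, Real.rpow_add_one hy0, e1]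
  rw [e2, e1]
  field_simp
  ring

/-- Theorem 2.2(ii): `ẽ₂(κ_n) = (p-1)/(2 (κ_n φ_f(κ_n))²) + o(1/(κ_n φ_f(κ_n))²)`. -/
theorem eTilde2_expansion
    (p : ℕ) (hp : 2 ≤ p) (f : ℝ → ℝ) (hf : MemF f)
    (κ : ℕ → ℝ) (hκpos : ∀ n, 0 < κ n) (hκtop : Tendsto κ atTop atTop) :
    Tendsto (fun n => (κ n * phiF f (κ n)) ^ 2 * eTilde2 p f (κ n))
      atTop (nhds (((p:ℝ) - 1) / 2)) := by
  have hp2 : (2:ℝ) ≤ (p:ℝ) := by exact_mod_cast hp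
  have hα0 : -1 < ((p:ℝ) - 3) / 2 := by linarith
  have hα1 : -1 < ((p:ℝ) - 3) / 2 + 1 := by linarith
  have hα2 : -1 < ((p:ℝ) - 3) / 2 + 2 := by linarith
  have htt : Tendsto (fun n => κ n * phiF f (κ n)) atTop atTop := hf.tendsto_top.comp hκtop
  have hg0 := Gconv f hf κ hκpos hκtop hα0 hα0
  have hg1 := Gconv f hf κ hκpos hκtop hα1 hα0
  have hg2 := Gconv f hf κ hκpos hκtop hα2 hα0
  have hGpos : 0 < Real.Gamma (((p:ℝ) - 3) / 2 + 1) := Real.Gamma_pos_of_pos (by linarith)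
  have hA : (0:ℝ) < (2:ℝ) ^ (((p:ℝ) - 3) / 2) := Real.rpow_pos_of_pos two_pos _
  have hL0 : (0:ℝ) < 2 ^ (((p:ℝ) - 3) / 2) * Real.Gamma (((p:ℝ) - 3) / 2 + 1) :=
    mul_pos hA hGpos
  have hcomb := ((hg2.mul hg0).sub (hg1.pow 2)).div (hg0.pow 2) (pow_ne_zero 2 hL0.ne')
  have e1 : Real.Gamma (((p:ℝ) - 3) / 2 + 1 + 1)
      = (((p:ℝ) - 3) / 2 + 1) * Real.Gamma (((p:ℝ) - 3) / 2 + 1) :=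
    Real.Gamma_add_one (by intro h; nlinarith)
  have e2 : Real.Gamma (((p:ℝ) - 3) / 2 + 2 + 1)
      = (((p:ℝ) - 3) / 2 + 1 + 1) *
        ((((p:ℝ) - 3) / 2 + 1) * Real.Gamma (((p:ℝ) - 3) / 2 + 1)) := by
    rw [show ((p:ℝ) - 3) / 2 + 2 + 1 = (((p:ℝ) - 3) / 2 + 1 + 1) + 1 by ring,
      Real.Gamma_add_one (by intro h; nlinarith), e1]
  have hval : (2 ^ (((p:ℝ) - 3) / 2) * Real.Gamma (((p:ℝ) - 3) / 2 + 2 + 1) *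
        (2 ^ (((p:ℝ) - 3) / 2) * Real.Gamma (((p:ℝ) - 3) / 2 + 1)) -
        (2 ^ (((p:ℝ) - 3) / 2) * Real.Gamma (((p:ℝ) - 3) / 2 + 1 + 1)) ^ 2) /
        (2 ^ (((p:ℝ) - 3) / 2) * Real.Gamma (((p:ℝ) - 3) / 2 + 1)) ^ 2
      = ((p:ℝ) - 1) / 2 := by
    rw [e2, e1]
    generalize hA2 : (2:ℝ) ^ (((p:ℝ) - 3) / 2) = A at hA ⊢
    generalize hG2 : Real.Gamma (((p:ℝ) - 3) / 2 + 1) = G at hGpos ⊢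
    rw [div_eq_iff (by positivity)]
    ring
  rw [hval] at hcomb
  refine Tendsto.congr' ?_ hcomb
  filter_upwards [htt.eventually_gt_atTop 0] with n htn
  exact (key_ident p hp f hf (κ n) (hκpos n) htn (((p:ℝ) - 3) / 2) rfl).symm
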